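/- arXiv:1108.5641 — 5 statements merged into one kernel-verified Lean document; each statement's English description precedes it below -/
import Mathlib

section
/- Let G be a torsion-free CSA group all of whose abelian subgroups are cyclic, and let A be a nontrivial abelian subgroup of G. Then racl(A) = acl(A) = acl^∃(A) = dcl^∃(A) = dcl(A) = rdcl(A) = C_G(A), the centralizer of A in G. -/
open FirstOrder Filter

/-! Common definitions: the first-order language of groups, algebraic/definable closures,
free products, amalgams, HNN extensions, etc. -/

/-- Function symbols of the language of groups: `1`, `⁻¹`, `·`. -/
inductive GrpFunc : ℕ → Type
  | one : GrpFunc 0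
  | inv : GrpFunc 1
  | mul : GrpFunc 2

/-- The first-order language of groups `L = {·, ⁻¹, 1}` (no relation symbols). -/
def grpLang : FirstOrder.Language := ⟨GrpFunc, fun _ => Empty⟩

/-- Every group is a `grpLang`-structure in the natural way. -/
instance grpStructure (G : Type*) [Group G] : grpLang.Structure G where
  funMap {_} f := match f with
    | .one => fun _ => (1 : G)
    | .inv => fun x => (x 0)⁻¹
    | .mul => fun x => x 0 * x 1
  RelMap {_} r := Empty.elim r

/-- A formula is existential if it is obtained from a quantifier-free formula by
prefixing existential quantifiers. -/
def IsExistential {L : FirstOrder.Language} {α : Type*} (φ : L.Formula α) : Prop :=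
  ∃ (n : ℕ) (ψ : L.BoundedFormula α n), ψ.IsQF ∧ φ = ψ.exs

section ModelTheory

variable (L : FirstOrder.Language) {M : Type*} [L.Structure M]

/-- The algebraic closure of a set of parameters `A` in an `L`-structure `M`:
elements satisfying, together with only finitely many other elements, some formula
with parameters from `A`. -/
def Lacl (A : Set M) : Set M :=
  {b | ∃ φ : L.Formula (↥A ⊕ Fin 1),
    {c : M | φ.Realize (Sum.elim Subtype.val fun _ => c)}.Finite ∧
    φ.Realize (Sum.elim Subtype.val fun _ => b)}

/-- The definable closure of a set of parameters `A` in an `L`-structure `M`. -/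
def Ldcl (A : Set M) : Set M :=
  {b | ∃ φ : L.Formula (↥A ⊕ Fin 1),
    {c : M | φ.Realize (Sum.elim Subtype.val fun _ => c)} = {b}}

/-- The existential algebraic closure of `A` in `M`. -/
def LaclE (A : Set M) : Set M :=
  {b | ∃ φ : L.Formula (↥A ⊕ Fin 1), IsExistential φ ∧
    {c : M | φ.Realize (Sum.elim Subtype.val fun _ => c)}.Finite ∧
    φ.Realize (Sum.elim Subtype.val fun _ => b)}

/-- The existential definable closure of `A` in `M`. -/
def LdclE (A : Set M) : Set M :=
  {b | ∃ φ : L.Formula (↥A ⊕ Fin 1), IsExistential φ ∧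
    {c : M | φ.Realize (Sum.elim Subtype.val fun _ => c)} = {b}}

end ModelTheory

section GroupDefs

variable {G : Type*} [Group G]

/-- Algebraic closure in a group, w.r.t. the language of groups. -/
def acl (A : Set G) : Set G := Lacl grpLang A

/-- Definable closure in a group, w.r.t. the language of groups. -/
def dcl (A : Set G) : Set G := Ldcl grpLang A

/-- Existential algebraic closure in a group. -/
def aclE (A : Set G) : Set G := LaclE grpLang A

/-- Existential definable closure in a group. -/
def dclE (A : Set G) : Set G := LdclE grpLang A

/-- Restricted algebraic closure: elements with finite orbit under automorphisms
of `G` fixing `A` pointwise. -/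
def racl (A : Set G) : Set G :=
  {g | {x : G | ∃ f : G ≃* G, (∀ a ∈ A, f a = a) ∧ f g = x}.Finite}

/-- Restricted definable closure: elements fixed by every automorphism of `G`
fixing `A` pointwise. -/
def rdcl (A : Set G) : Set G :=
  {g | ∀ f : G ≃* G, (∀ a ∈ A, f a = a) → f g = g}

/-- A set of group elements is nonabelian (contains two non-commuting elements). -/
def Nonabelian (A : Set G) : Prop := ∃ x ∈ A, ∃ y ∈ A, x * y ≠ y * x

/-- `F` is a free group of finite rank. -/
def IsFreeOfFiniteRank (F : Type*) [Group F] : Prop :=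
  ∃ n : ℕ, Nonempty (F ≃* FreeGroup (Fin n))

/-- `G` is the internal free product of its subgroups `H` and `K`: the canonical
homomorphism from the abstract free product `H ∗ K` to `G` is an isomorphism. -/
def InternalFreeProduct (H K : Subgroup G) : Prop :=
  Function.Bijective (Monoid.Coprod.lift H.subtype K.subtype)

/-- `G` is freely indecomposable relative to its subgroup `A`. -/
def FreelyIndecomposableRel (A : Subgroup G) : Prop :=
  ¬ ∃ G₁ G₂ : Subgroup G, G₁ ≠ ⊥ ∧ G₂ ≠ ⊥ ∧ A ≤ G₁ ∧ InternalFreeProduct G₁ G₂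

/-- `B` is a free factor of the subgroup `K`: there is `L` such that the canonical
homomorphism from the abstract free product `B ∗ L` to the ambient group is injective
with image exactly `K`. -/
def IsFreeFactorOf (B K : Subgroup G) : Prop :=
  ∃ L : Subgroup G,
    Function.Injective (Monoid.Coprod.lift B.subtype L.subtype) ∧
    (Monoid.Coprod.lift B.subtype L.subtype).range = K

/-- `K'` is the amalgamated free product `K ∗_C B` inside the ambient group `G`:
the canonical homomorphism from the abstract amalgamated product (pushout) of `K` and
`B` over `C` to `G` is injective with image exactly `K'`. -/
def IsAmalgamOf (K B C : Subgroup G) (hCK : C ≤ K) (hCB : C ≤ B) (K' : Subgroup G) : Prop :=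
  ∃ ℓ : Monoid.PushoutI
      (fun i : Bool =>
        (Subgroup.inclusion (show C ≤ cond i K B by cases i <;> assumption) :
          ↥C →* ↥(cond i K B))) →* G,
    (∀ i : Bool, ℓ.comp (Monoid.PushoutI.of i) = (cond i K B).subtype) ∧
    Function.Injective ℓ ∧ ℓ.range = K'

/-- `K'` is the HNN extension of `K` along `φ : C ≃* D` inside the ambient group `G`:
the canonical homomorphism from the abstract HNN extension of `K` along `φ` to `G` is
injective with image exactly `K'` (and is the inclusion on `K`). -/
def IsHNNOf (K : Subgroup G) {C D : Subgroup ↥K} (φ : ↥C ≃* ↥D) (K' : Subgroup G) : Prop :=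
  ∃ ℓ : HNNExtension ↥K C D φ →* G,
    ℓ.comp HNNExtension.of = K.subtype ∧ Function.Injective ℓ ∧ ℓ.range = K'

/-- One constructibility step: `K'` is an amalgamated free product of `K` with some
subgroup over a cyclic subgroup, or an HNN extension of `K` along an isomorphism of two
cyclic subgroups of `K`. -/
def ConstructStep (K K' : Subgroup G) : Prop :=
  (∃ (B C : Subgroup G) (hCK : C ≤ K) (hCB : C ≤ B),
      (∃ c : G, C = Subgroup.zpowers c) ∧ B ≤ K' ∧ K ≤ K' ∧ IsAmalgamOf K B C hCK hCB K')
  ∨ (∃ (C D : Subgroup ↥K) (φ : ↥C ≃* ↥D),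
      (∃ c : ↥K, C = Subgroup.zpowers c) ∧ (∃ d : ↥K, D = Subgroup.zpowers d) ∧ IsHNNOf K φ K')

/-- `B` is constructible from `A` by a finite sequence of amalgamated free products and
HNN-extensions along cyclic subgroups. -/
def ConstructibleFrom (A B : Subgroup G) : Prop := Relation.ReflTransGen ConstructStep A B

/-- The rank of a subgroup: the least cardinality of a generating set. For (subgroups of)
free groups this is the cardinality of a basis. -/
noncomputable def srank (H : Subgroup G) : Cardinal :=
  sInf {c : Cardinal | ∃ S : Set G, Subgroup.closure S = H ∧ c = Cardinal.mk ↥S}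

/-- `M` is a maximal abelian subgroup. -/
def IsMaxAbelian (M : Subgroup G) : Prop :=
  (∀ x ∈ M, ∀ y ∈ M, x * y = y * x) ∧
  ∀ N : Subgroup G, (∀ x ∈ N, ∀ y ∈ N, x * y = y * x) → M ≤ N → M = N

/-- `M` is a maximal abelian subgroup of the subgroup `H`. -/
def IsMaxAbelianIn (M H : Subgroup G) : Prop :=
  M ≤ H ∧ (∀ x ∈ M, ∀ y ∈ M, x * y = y * x) ∧
  ∀ N : Subgroup G, N ≤ H → (∀ x ∈ N, ∀ y ∈ N, x * y = y * x) → M ≤ N → M = N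

/-- `M` is a malnormal subgroup: `gMg⁻¹ ∩ M = 1` for every `g ∉ M`. -/
def Malnormal (M : Subgroup G) : Prop :=
  ∀ g : G, g ∉ M → ∀ x ∈ M, g * x * g⁻¹ ∈ M → x = 1

/-- A group is CSA if every maximal abelian subgroup is malnormal. -/
def IsCSA (G : Type*) [Group G] : Prop := ∀ M : Subgroup G, IsMaxAbelian M → Malnormal M

/-- Every abelian subgroup of `G` is cyclic. -/
def AbelianSubgroupsCyclic (G : Type*) [Group G] : Prop :=
  ∀ H : Subgroup G, (∀ x ∈ H, ∀ y ∈ H, x * y = y * x) → ∃ g : G, H = Subgroup.zpowers g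

/-- `G` is equationally noetherian: every system of equations over `G` in finitely many
variables is equivalent to a finite subsystem. -/
def EqNoetherian (G : Type*) [Group G] : Prop :=
  ∀ n : ℕ, 0 < n → ∀ S : Set (Monoid.Coprod G (FreeGroup (Fin n))),
    ∃ S₀ : Set (Monoid.Coprod G (FreeGroup (Fin n))), S₀ ⊆ S ∧ S₀.Finite ∧
      ∀ f : Monoid.Coprod G (FreeGroup (Fin n)) →* G,
        f.comp Monoid.Coprod.inl = MonoidHom.id G →
        ((∀ s ∈ S₀, f s = 1) ↔ ∀ s ∈ S, f s = 1)

/-- A group homomorphism is elementary w.r.t. the language of groups: it preserves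
and reflects all first-order formulas. -/
def ElementaryEmb {H K : Type*} [Group H] [Group K] (e : H →* K) : Prop :=
  ∀ (n : ℕ) (φ : grpLang.Formula (Fin n)) (v : Fin n → H),
    (φ.Realize fun i => e (v i)) ↔ φ.Realize v

/-- The inclusion of the subgroup `H` is an elementary embedding; i.e. the ambient group
is an elementary extension of `H`. -/
def ElementarySub (H : Subgroup G) : Prop := ElementaryEmb H.subtype

/-- A sequence of homomorphisms is stable. -/
def StableSeq {K H : Type*} [Group K] [Group H] (h : ℕ → (K →* H)) : Prop :=
  ∀ k : K, (∀ᶠ n in Filter.atTop, h n k = 1) ∨ (∀ᶠ n in Filter.atTop, h n k ≠ 1)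

/-- A sequence of homomorphisms has trivial stable kernel. -/
def TrivialStableKernel {K H : Type*} [Group K] [Group H] (h : ℕ → (K →* H)) : Prop :=
  ∀ k : K, (∀ᶠ n in Filter.atTop, h n k = 1) → k = 1

/-- A stable sequence of homomorphisms `g n : D → H` with trivial stable kernel strongly
converges to `D`, where `D` is a subgroup of an extension of the base group `H`, the base
group being embedded via `e`. -/
def StronglyConverges {H Gs : Type*} [Group H] [Group Gs] (e : H →* Gs)
    (D : Subgroup Gs) (g : ℕ → (↥D →* H)) : Prop :=
  StableSeq g ∧ TrivialStableKernel g ∧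
  (∀ (d : ↥D) (b : H), (d : Gs) = e b → ∀ᶠ n in Filter.atTop, g n d = b) ∧
  (∀ (d : ↥D) (b : H), (∃ᶠ n in Filter.atTop, g n d = b) → (d : Gs) = e b)

/-- The ball of radius `r` about the identity in the word metric w.r.t. `S`. -/
def wordBall (S : Set G) (r : ℕ) : Set G :=
  {g | ∃ l : List G, l.length ≤ r ∧ (∀ x ∈ l, x ∈ S ∨ x⁻¹ ∈ S) ∧ l.prod = g}

end GroupDefs

/-- A monoid is torsion-free if every non-identity element has infinite order
(the old Mathlib `Monoid.IsTorsionFree`, removed since). -/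
def Monoid.IsTorsionFree (G : Type*) [Monoid G] : Prop :=
  ∀ g : G, g ≠ 1 → ¬IsOfFinOrder g

/-! In a CSA group commutation is transitive on nontrivial elements, so for `1 ≠ a ∈ A` the
centralizer `C` of `A` is the centralizer of `a`; it is abelian, hence cyclic.

If `g ∉ C`, its conjugates by the powers of `a` are automorphic images of `g` over `A`, and they
are pairwise distinct: two equal ones would give a nontrivial power of `a` commuting with `g`,
forcing `g ∈ C`. Hence `racl A ⊆ C`.

If `g ∈ C`, some power `g ^ n` with `n ≠ 0` lies in the nontrivial subgroup `A` of the cyclic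
group `C`. Roots are unique in a torsion-free CSA group, so `g` is the only solution of the
atomic formula `x ^ n = g ^ n` over `A`, and `C ⊆ dcl^∃ A`. All the other closures lie between
`dcl^∃ A` and `racl A`. -/

open FirstOrder.Language

section Closures

variable {G : Type*} [Group G]

def MulEquiv.toGrpLangEquiv {H : Type*} [Group H] (f : G ≃* H) : G ≃[grpLang] H where
  toEquiv := f.toEquiv
  map_fun' {_} F x := by
    cases F with
    | one => exact map_one f
    | inv => exact map_inv f _
    | mul => exact map_mul f _ _
  map_rel' {_} r := r.elim

theorem realize_apply_iff_of_forall_mem_eq {A : Set G} (f : G ≃* G) (hf : ∀ a ∈ A, f a = a)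
    (φ : grpLang.Formula (↥A ⊕ Fin 1)) (b : G) :
    φ.Realize (Sum.elim Subtype.val fun _ => f b) ↔
      φ.Realize (Sum.elim Subtype.val fun _ => b) := by
  rw [← StrongHomClass.realize_formula f.toGrpLangEquiv φ
    (v := Sum.elim Subtype.val fun _ => b)]
  congr! 1
  funext i
  rcases i with a | _
  · exact (hf a a.2).symm
  · rfl

variable {A : Set G}

theorem acl_subset_racl : acl A ⊆ racl A := by
  rintro b ⟨φ, hfin, hb⟩
  refine hfin.subset ?_
  rintro _ ⟨f, hf, rfl⟩
  exact (realize_apply_iff_of_forall_mem_eq f hf φ b).2 hb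

theorem dcl_subset_rdcl : dcl A ⊆ rdcl A := by
  rintro b ⟨φ, hφ⟩ f hf
  have hb : b ∈ {c : G | φ.Realize (Sum.elim Subtype.val fun _ => c)} := hφ ▸ rfl
  rw [← Set.mem_singleton_iff, ← hφ]
  exact (realize_apply_iff_of_forall_mem_eq f hf φ b).2 hb

theorem rdcl_subset_racl : rdcl A ⊆ racl A := by
  intro g hg
  refine (Set.finite_singleton g).subset ?_
  rintro _ ⟨f, hf, rfl⟩
  exact hg f hf

theorem dclE_subset_dcl : dclE A ⊆ dcl A := by
  rintro b ⟨φ, -, hφ⟩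
  exact ⟨φ, hφ⟩

theorem dclE_subset_aclE : dclE A ⊆ aclE A := by
  rintro b ⟨φ, hex, hφ⟩
  have hb : b ∈ {c : G | φ.Realize (Sum.elim Subtype.val fun _ => c)} := hφ ▸ rfl
  exact ⟨φ, hex, hφ ▸ Set.finite_singleton b, hb⟩

theorem aclE_subset_acl : aclE A ⊆ acl A := by
  rintro b ⟨φ, -, hfin, hb⟩
  exact ⟨φ, hfin, hb⟩

def powTerm {α : Type*} (t : grpLang.Term α) : ℕ → grpLang.Term α
  | 0 => Term.func GrpFunc.one ![]
  | n + 1 => Term.func GrpFunc.mul ![powTerm t n, t]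

theorem realize_powTerm {α : Type*} (v : α → G) (t : grpLang.Term α) (n : ℕ) :
    (powTerm t n).realize v = t.realize v ^ n := by
  induction n with
  | zero => rw [pow_zero]; rfl
  | succ n ih => rw [pow_succ, ← ih]; rfl

theorem mem_dclE_of_forall_pow_eq_iff {b d : G} {n : ℕ} (hd : d ∈ A)
    (h : ∀ x : G, x ^ n = d ↔ x = b) : b ∈ dclE A := by
  refine ⟨(powTerm (Term.var (Sum.inr 0)) n).equal (Term.var (Sum.inl ⟨d, hd⟩)),
    ⟨0, _, (BoundedFormula.IsAtomic.equal _ _).isQF, rfl⟩, ?_⟩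
  ext x
  simp only [Set.mem_ofPred_eq, Formula.realize_equal, realize_powTerm, Term.realize_var,
    Sum.elim_inl, Sum.elim_inr, h, Set.mem_singleton_iff]

end Closures

section CSA

variable {G : Type*} [Group G]

theorem exists_isMaxAbelian_mem (a : G) : ∃ M : Subgroup G, IsMaxAbelian M ∧ a ∈ M := by
  let S : Set (Subgroup G) := {H | ∀ x ∈ H, ∀ y ∈ H, x * y = y * x}
  have hchain : ∀ c ⊆ S, IsChain (· ≤ ·) c → ∀ H ∈ c, ∃ ub ∈ S, ∀ K ∈ c, K ≤ ub := by
    intro c hcS hc H hH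
    refine ⟨sSup c, ?_, fun K hK => le_sSup hK⟩
    intro x hx y hy
    rw [Subgroup.mem_sSup_of_directedOn ⟨H, hH⟩ hc.directedOn] at hx hy
    obtain ⟨Kx, hKx, hx⟩ := hx
    obtain ⟨Ky, hKy, hy⟩ := hy
    rcases hc.total hKx hKy with h | h
    · exact hcS hKy x (h hx) y hy
    · exact hcS hKx x hx y (h hy)
  have hzpowers : Subgroup.zpowers a ∈ S := by
    rintro _ ⟨m, rfl⟩ _ ⟨n, rfl⟩
    exact (Commute.refl a).zpow_zpow m n
  obtain ⟨M, hle, hMS, hmax⟩ := zorn_le_nonempty₀ S hchain _ hzpowers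
  exact ⟨M, ⟨hMS, fun N hN hMN => le_antisymm hMN (hmax hN hMN)⟩,
    hle (Subgroup.mem_zpowers a)⟩

theorem IsCSA.commute_trans (hG : IsCSA G) {a x y : G} (ha : a ≠ 1) (hx : Commute x a)
    (hy : Commute y a) : Commute x y := by
  obtain ⟨M, hM, haM⟩ := exists_isMaxAbelian_mem a
  have hmem : ∀ z : G, Commute z a → z ∈ M := by
    intro z hz
    by_contra hzM
    refine ha (hG M hM z hzM a haM ?_)
    rwa [hz.eq, mul_inv_cancel_right]
  exact hM.1 x (hmem x hx) y (hmem y hy)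

theorem Monoid.IsTorsionFree.pow_eq_one_iff (hG : Monoid.IsTorsionFree G) {x : G} {n : ℕ}
    (hn : n ≠ 0) : x ^ n = 1 ↔ x = 1 := by
  refine ⟨fun h => ?_, by rintro rfl; exact one_pow n⟩
  by_contra hx
  exact hG x hx (isOfFinOrder_iff_pow_eq_one.2 ⟨n, Nat.pos_of_ne_zero hn, h⟩)

-- `x` and `y` both commute with `x ^ n = y ^ n`, hence `(x * y⁻¹) ^ n = 1`.
theorem IsCSA.pow_left_injective (hG : IsCSA G) (hTF : Monoid.IsTorsionFree G) {n : ℕ}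
    (hn : n ≠ 0) : Function.Injective fun x : G => x ^ n := by
  intro x y (hxy : x ^ n = y ^ n)
  by_cases hy : y ^ n = 1
  · rw [(hTF.pow_eq_one_iff hn).1 hy, ← hTF.pow_eq_one_iff hn, hxy, hy]
  have hcomm : Commute x y :=
    hG.commute_trans hy (hxy ▸ Commute.self_pow x n) (Commute.self_pow y n)
  rw [← mul_inv_eq_one, ← hTF.pow_eq_one_iff hn, (hcomm.inv_right).mul_pow, hxy, inv_pow,
    mul_inv_cancel]

theorem Subgroup.exists_pow_mem_of_le_zpowers {A : Subgroup G} {a c g : G} (haA : a ∈ A)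
    (ha : a ≠ 1) (hAc : A ≤ Subgroup.zpowers c) (hg : g ∈ Subgroup.zpowers c) :
    ∃ n ≠ 0, g ^ n ∈ A := by
  obtain ⟨e, rfl⟩ := Subgroup.mem_zpowers_iff.1 (hAc haA)
  obtain ⟨m, rfl⟩ := Subgroup.mem_zpowers_iff.1 hg
  obtain ⟨n, he⟩ := Int.eq_nat_or_neg e
  have hcn : c ^ (n : ℤ) ∈ A := by
    rcases he with rfl | rfl
    · exact haA
    · simpa only [zpow_neg, inv_mem_iff] using haA
  refine ⟨n, ?_, ?_⟩
  · rintro rfl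
    apply ha
    rcases he with rfl | rfl <;> simp
  · rw [← zpow_natCast, ← zpow_mul, mul_comm, zpow_mul]
    exact A.zpow_mem hcn m

theorem exists_zpow_commute_of_mem_racl {A : Set G} {c g : G}
    (hc : c ∈ Subgroup.centralizer A) (hg : g ∈ racl A) :
    ∃ n : ℤ, n ≠ 0 ∧ Commute (c ^ n) g := by
  have hmaps : Set.MapsTo (fun n : ℤ => c ^ n * g * (c ^ n)⁻¹) Set.univ
      {x | ∃ f : G ≃* G, (∀ a ∈ A, f a = a) ∧ f g = x} := by
    intro n _
    refine ⟨MulAut.conj (c ^ n), fun a ha => ?_, rfl⟩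
    have hca : Commute (c ^ n) a :=
      (show Commute c a from (Subgroup.mem_centralizer_iff.1 hc a ha).symm).zpow_left n
    rw [MulAut.conj_apply, hca.eq, mul_inv_cancel_right]
  obtain ⟨m, -, n, -, hmn, heq⟩ := Set.infinite_univ.exists_ne_map_eq_of_mapsTo hmaps hg
  refine ⟨m - n, sub_ne_zero.2 hmn, ?_⟩
  rw [sub_eq_neg_add, zpow_add, zpow_neg]
  calc (c ^ n)⁻¹ * c ^ m * g = (c ^ n)⁻¹ * (c ^ m * g * (c ^ m)⁻¹) * c ^ m := by group
    _ = (c ^ n)⁻¹ * (c ^ n * g * (c ^ n)⁻¹) * c ^ m := by rw [heq]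
    _ = g * ((c ^ n)⁻¹ * c ^ m) := by group

theorem IsCSA.mem_centralizer_iff_commute (hG : IsCSA G) {A : Set G}
    (hab : ∀ x ∈ A, ∀ y ∈ A, x * y = y * x) {a x : G} (haA : a ∈ A) (ha : a ≠ 1) :
    x ∈ Subgroup.centralizer A ↔ Commute x a := by
  refine ⟨fun hx => (Subgroup.mem_centralizer_iff.1 hx a haA).symm, fun hx => ?_⟩
  exact Subgroup.mem_centralizer_iff.2 fun y hy => hG.commute_trans ha (hab y hy a haA) hx

theorem IsCSA.racl_subset_centralizer (hG : IsCSA G) (hTF : Monoid.IsTorsionFree G)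
    {A : Set G} (hab : ∀ x ∈ A, ∀ y ∈ A, x * y = y * x) {a : G} (haA : a ∈ A) (ha : a ≠ 1) :
    racl A ⊆ Subgroup.centralizer A := by
  intro g hg
  have haC : a ∈ Subgroup.centralizer A :=
    Subgroup.mem_centralizer_iff.2 fun y hy => hab y hy a haA
  obtain ⟨n, hn, hcomm⟩ := exists_zpow_commute_of_mem_racl haC hg
  have han : a ^ n ≠ 1 := fun h =>
    hn (injective_zpow_iff_not_isOfFinOrder.2 (hTF a ha) (h.trans (zpow_zero a).symm))
  exact (hG.mem_centralizer_iff_commute hab haA ha).2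
    (hG.commute_trans han hcomm.symm ((Commute.refl a).zpow_right n))

theorem IsCSA.centralizer_subset_dclE (hG : IsCSA G) (hTF : Monoid.IsTorsionFree G)
    (hcyc : AbelianSubgroupsCyclic G) {A : Subgroup G} (hab : ∀ x ∈ A, ∀ y ∈ A, x * y = y * x)
    {a : G} (haA : a ∈ A) (ha : a ≠ 1) :
    (Subgroup.centralizer (A : Set G) : Set G) ⊆ dclE (A : Set G) := by
  intro g hg
  have hCab : ∀ x ∈ Subgroup.centralizer (A : Set G), ∀ y ∈ Subgroup.centralizer (A : Set G),
      x * y = y * x := fun x hx y hy =>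
    hG.commute_trans ha ((hG.mem_centralizer_iff_commute hab haA ha).1 hx)
      ((hG.mem_centralizer_iff_commute hab haA ha).1 hy)
  obtain ⟨c, hc⟩ := hcyc _ hCab
  have hAC : A ≤ Subgroup.centralizer (A : Set G) := fun x hx =>
    Subgroup.mem_centralizer_iff.2 fun y hy => hab y hy x hx
  obtain ⟨n, hn, hgn⟩ := A.exists_pow_mem_of_le_zpowers haA ha (hc ▸ hAC) (hc ▸ hg)
  exact mem_dclE_of_forall_pow_eq_iff hgn fun x => (hG.pow_left_injective hTF hn).eq_iff

end CSA

/-- Let `G` be a torsion-free CSA group all of whose abelian subgroups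
are cyclic, and `A` a nontrivial abelian subgroup of `G`. Then
`racl(A) = acl(A) = acl^∃(A) = dcl^∃(A) = dcl(A) = rdcl(A) = C_G(A)`. -/
theorem closures_of_abelian_eq_centralizer {G : Type*} [Group G]
    (hTF : Monoid.IsTorsionFree G) (hCSA : IsCSA G) (hcyc : AbelianSubgroupsCyclic G)
    (A : Subgroup G) (hA : A ≠ ⊥) (hab : ∀ x ∈ A, ∀ y ∈ A, x * y = y * x) :
    racl (A : Set G) = (Subgroup.centralizer (A : Set G) : Set G) ∧
    acl (A : Set G) = (Subgroup.centralizer (A : Set G) : Set G) ∧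
    aclE (A : Set G) = (Subgroup.centralizer (A : Set G) : Set G) ∧
    dclE (A : Set G) = (Subgroup.centralizer (A : Set G) : Set G) ∧
    dcl (A : Set G) = (Subgroup.centralizer (A : Set G) : Set G) ∧
    rdcl (A : Set G) = (Subgroup.centralizer (A : Set G) : Set G) := by
  obtain ⟨⟨a, haA⟩, ha⟩ := Subgroup.ne_bot_iff_exists_ne_one.1 hA
  replace ha : a ≠ 1 := fun h => ha (Subtype.ext h)
  have hracl := hCSA.racl_subset_centralizer hTF hab haA ha
  have hdclE := hCSA.centralizer_subset_dclE hTF hcyc hab haA ha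
  exact ⟨hracl.antisymm (hdclE.trans <| dclE_subset_dcl.trans <| dcl_subset_rdcl.trans
      rdcl_subset_racl),
    (acl_subset_racl.trans hracl).antisymm (hdclE.trans <| dclE_subset_aclE.trans aclE_subset_acl),
    (aclE_subset_acl.trans <| acl_subset_racl.trans hracl).antisymm
      (hdclE.trans dclE_subset_aclE),
    (dclE_subset_dcl.trans <| dcl_subset_rdcl.trans <| rdcl_subset_racl.trans hracl).antisymm
      hdclE,
    (dcl_subset_rdcl.trans <| rdcl_subset_racl.trans hracl).antisymm
      (hdclE.trans dclE_subset_dcl),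
    (rdcl_subset_racl.trans hracl).antisymm
      (hdclE.trans <| dclE_subset_dcl.trans dcl_subset_rdcl)⟩
end

section
/- Let G be an equationally noetherian group, let G* be an elementary extension of G (in the language of groups), let P be a subset of G, and let K be a finitely generated subgroup of G* with P ⊆ K. Then there exists a finite subset P₀ ⊆ P such that every group homomorphism f : K → G* fixing P₀ pointwise fixes P pointwise. -/
open FirstOrder Filter

/-! Write the finitely many generators of `K` as `k₁, …, kₙ`, so every `p ∈ P` is a word
`w_p(k)`. The system `{w_p(x) = p : p ∈ P}` over `G` is equivalent to a finite subsystem indexed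
by some finite `P₀ ⊆ P`, so for each `p ∈ P` the group `G` satisfies the first-order sentence
`∀ x, (⋀_{q ∈ P₀} w_q(x) = q) → w_p(x) = p` with parameters in `G`. By elementarity `G*` satisfies
it too, and evaluating it at `x = f(k)` shows that `f` fixes `p` once it fixes `P₀`. -/

namespace GrpLang

open FirstOrder.Language

variable {ι : Type*} [DecidableEq ι]

def wordTerm (w : FreeGroup ι) : grpLang.Term ι :=
  w.toWord.foldr
    (fun x t => Term.func GrpFunc.mul
      ![cond x.2 (Term.var x.1) (Term.func GrpFunc.inv ![Term.var x.1]), t])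
    (Term.func GrpFunc.one ![])

theorem realize_wordTerm {M : Type*} [Group M] (v : ι → M) (w : FreeGroup ι) :
    (wordTerm w).realize v = FreeGroup.lift v w := by
  conv_rhs => rw [← FreeGroup.mk_toWord (x := w), FreeGroup.lift_mk]
  rw [wordTerm]
  induction w.toWord with
  | nil => rfl
  | cons x l ih =>
    rw [List.foldr_cons, List.map_cons, List.prod_cons, ← ih]
    cases x.2 <;> rfl

noncomputable def wordImplFormula {N m : ℕ} (ws : Fin m → FreeGroup (Fin N))
    (w : FreeGroup (Fin N)) : grpLang.Formula (Fin (m + 1)) :=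
  (BoundedFormula.iInf (fun i : Fin m =>
      ((wordTerm (ws i)).relabel Sum.inr).bdEqual (Term.var (Sum.inl i.succ))) ⟹
    ((wordTerm w).relabel Sum.inr).bdEqual (Term.var (Sum.inl 0))).alls

theorem realize_wordImplFormula {M : Type*} [Group M] {N m : ℕ}
    (ws : Fin m → FreeGroup (Fin N)) (w : FreeGroup (Fin N)) (v : Fin (m + 1) → M) :
    (wordImplFormula ws w).Realize v ↔
      ∀ xs : Fin N → M, (∀ i, FreeGroup.lift xs (ws i) = v i.succ) →
        FreeGroup.lift xs w = v 0 := by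
  simp only [wordImplFormula, BoundedFormula.realize_alls, BoundedFormula.realize_imp,
    BoundedFormula.realize_iInf, BoundedFormula.realize_bdEqual, Term.realize_relabel,
    Sum.elim_comp_inr, realize_wordTerm, Term.realize_var, Sum.elim_inl]

end GrpLang

theorem ElementaryEmb.forall_lift_eq_imp {H H' : Type*} [Group H] [Group H'] {e : H →* H'}
    (he : ElementaryEmb e) {N m : ℕ} (ws : Fin m → FreeGroup (Fin N)) (w : FreeGroup (Fin N))
    (hs : Fin m → H) (h : H)
    (himp : ∀ xs : Fin N → H, (∀ i, FreeGroup.lift xs (ws i) = hs i) → FreeGroup.lift xs w = h)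
    (xs : Fin N → H') (hxs : ∀ i, FreeGroup.lift xs (ws i) = e (hs i)) :
    FreeGroup.lift xs w = e h := by
  have hreal := (he (m + 1) (GrpLang.wordImplFormula ws w) (Fin.cons h hs)).mpr
    ((GrpLang.realize_wordImplFormula ws w _).mpr (by simpa using himp))
  exact (GrpLang.realize_wordImplFormula ws w _).mp hreal xs (by simpa using hxs)

theorem EqNoetherian.exists_fin_subsystem {H : Type*} [Group H] (hEN : EqNoetherian H)
    {N : ℕ} (hN : 0 < N) {ι : Type*} (ws : ι → FreeGroup (Fin N)) (g : ι → H) :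
    ∃ (m : ℕ) (q : Fin m → ι), ∀ xs : Fin N → H,
      (∀ j, FreeGroup.lift xs (ws (q j)) = g (q j)) → ∀ i, FreeGroup.lift xs (ws i) = g i := by
  let eqn : ι → Monoid.Coprod H (FreeGroup (Fin N)) := fun i =>
    Monoid.Coprod.inr (ws i) * (Monoid.Coprod.inl (g i))⁻¹
  obtain ⟨S₀, hS₀, hS₀fin, hsol⟩ := hEN N hN (Set.range eqn)
  obtain ⟨m, r, -, rfl⟩ := hS₀fin.fin_param
  choose q hq using fun j => hS₀ (Set.mem_range_self j)
  refine ⟨m, q, fun xs hxs => ?_⟩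
  let F := Monoid.Coprod.lift (MonoidHom.id H) (FreeGroup.lift xs)
  have hF : ∀ i, F (eqn i) = 1 ↔ FreeGroup.lift xs (ws i) = g i := fun i => by
    simp [F, eqn, mul_inv_eq_one]
  have hsol₀ : ∀ s ∈ Set.range r, F s = 1 := by
    rintro _ ⟨j, rfl⟩
    rw [← hq j, hF]
    exact hxs j
  intro i
  exact (hF i).mp ((hsol F (Monoid.Coprod.lift_comp_inl _ _)).mp hsol₀ _ (Set.mem_range_self i))

theorem Group.FG.exists_surjective_lift_fin_succ {H : Type*} [Group H] [Group.FG H] :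
    ∃ (n : ℕ) (k : Fin (n + 1) → H), Function.Surjective (FreeGroup.lift k) := by
  obtain ⟨S, hS, hSfin⟩ := Group.fg_iff.mp ‹Group.FG H›
  obtain ⟨n, k, -, rfl⟩ := hSfin.fin_param
  refine ⟨n, Fin.cons 1 k, ?_⟩
  rwa [FreeGroup.lift_surjective_iff_closure_range_eq_top, Fin.range_cons,
    Subgroup.closure_insert_one]

/-- Let `G` be an equationally noetherian group, `G*` an elementary
extension of `G`, `P` a subset of `G` and `K` a finitely generated subgroup of `G*`
with `P ⊆ K`. Then there is a finite subset `P₀ ⊆ P` such that every homomorphism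
`f : K → G*` fixing `P₀` pointwise fixes `P` pointwise. (Here `G` is realized as a
subgroup of `G*` whose inclusion is elementary.) -/
theorem finite_subset_determines_fixing {Gs : Type*} [Group Gs] (G : Subgroup Gs)
    (hel : ElementarySub G) (hEN : EqNoetherian ↥G)
    (P : Set Gs) (hPG : P ⊆ (G : Set Gs))
    (K : Subgroup Gs) (hK : K.FG) (hPK : P ⊆ (K : Set Gs)) :
    ∃ (P₀ : Set Gs) (hsub : P₀ ⊆ P), P₀.Finite ∧
      ∀ f : ↥K →* Gs,
        (∀ p (hp : p ∈ P₀), f ⟨p, hPK (hsub hp)⟩ = p) →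
        ∀ p (hp : p ∈ P), f ⟨p, hPK hp⟩ = p := by
  have := (Group.fg_iff_subgroup_fg K).mpr hK
  obtain ⟨n, k, hk⟩ := Group.FG.exists_surjective_lift_fin_succ (H := K)
  choose word hword using fun p : P => hk ⟨p, hPK p.2⟩
  obtain ⟨m, q, hq⟩ := hEN.exists_fin_subsystem n.succ_pos word fun p => ⟨p, hPG p.2⟩
  refine ⟨Set.range fun j => (q j : Gs), Set.range_subset_iff.mpr fun j => (q j).2,
    Set.finite_range _, fun f hf p hp => ?_⟩
  have hf_word : ∀ p : P, FreeGroup.lift (f ∘ k) (word p) = f ⟨p, hPK p.2⟩ := fun p => by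
    rw [← hword p, ← MonoidHom.comp_apply]
    exact (FreeGroup.lift_unique (f.comp (FreeGroup.lift k)) (by simp)).symm
  have hfp := hel.forall_lift_eq_imp (word ∘ q) (word ⟨p, hp⟩) (fun j => ⟨q j, hPG (q j).2⟩)
    ⟨p, hPG hp⟩ (fun xs hxs => hq xs hxs ⟨p, hp⟩) (f ∘ k)
    (fun j => (hf_word (q j)).trans (hf _ ⟨j, rfl⟩))
  rwa [hf_word] at hfp
end

section
/- Let G be a finitely generated equationally noetherian group and A a subgroup of G. Let K be a finitely generated subgroup of G such that acl^∃(A) is a proper subgroup of K. Then there exists a stable sequence of pairwise distinct group homomorphisms (hₙ : K → G) with trivial stable kernel which bounds acl^∃(A) in the limit. -/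
open FirstOrder Filter

/-!
Pick `b ∈ K \ acl^∃(A)` and a finite generating tuple of `K`. Because `G` is equationally
noetherian, finitely many of the relations of this tuple imply all of them, so homomorphisms
`K → G` are exactly the tuples of `G` satisfying a finite system of equations. Enumerate
`K = {k₀, k₁, …}`. For each `n`, the tuples satisfying this system, keeping `k₀, …, kₙ₋₁`
nontrivial when they are nontrivial, and sending each `kⱼ ∈ acl^∃(A)` to a realization of an
existential formula over `A` with finitely many realizations, form an existentially definable
family. Hence the images of `b` under the corresponding homomorphisms form an existentially
definable set over `A`; it contains `b`, so it is infinite. Choosing at each step a homomorphism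
sending `b` to a new element gives pairwise distinct homomorphisms; each nontrivial `k` is
eventually not killed, and each `k ∈ acl^∃(A)` eventually lands in a fixed finite set.
-/

open FirstOrder Language

theorem exists_sum_arrow_iff {α β γ : Type*} {p : (α ⊕ β → γ) → Prop} :
    (∃ f, p f) ↔ ∃ a b, p (Sum.elim a b) :=
  ⟨fun ⟨f, hf⟩ => ⟨f ∘ Sum.inl, f ∘ Sum.inr, by rwa [Sum.elim_comp_inl_inr]⟩,
    fun ⟨a, b, h⟩ => ⟨_, h⟩⟩

theorem IsExistential.of_isQF {L : Language} {α : Type*} {φ : L.Formula α} (h : φ.IsQF) :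
    IsExistential φ :=
  ⟨0, φ, h, rfl⟩

theorem FirstOrder.Language.BoundedFormula.IsQF.toFormula {L : Language} {α : Type*} {n : ℕ}
    {φ : L.BoundedFormula α n} (h : φ.IsQF) : φ.toFormula.IsQF := by
  induction h with
  | falsum => exact BoundedFormula.isQF_bot
  | of_isAtomic h =>
    cases h with
    | equal t₁ t₂ => exact (BoundedFormula.IsAtomic.equal _ _).isQF
    | rel R ts => exact (BoundedFormula.IsAtomic.rel _ _).isQF
  | imp _ _ ih₁ ih₂ => exact ih₁.imp ih₂

theorem FirstOrder.Language.BoundedFormula.IsQF.formula_relabel {L : Language} {α β : Type*}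
    {φ : L.Formula α} (h : φ.IsQF) (g : α → β) : (φ.relabel g).IsQF :=
  h.relabel _

section ExistentialDefinability

variable {L : Language} {M : Type*} [L.Structure M] {A : Set M} {ι κ : Type*}

-- The witnesses are indexed by a finite type rather than by `Fin n`, so that conjunction and
-- existential projection are mere relabellings.
variable (L A) in
def ExDefinable (P : (ι → M) → Prop) : Prop :=
  ∃ (γ : Type) (_ : Finite γ) (ψ : L.Formula (A ⊕ (ι ⊕ γ))), ψ.IsQF ∧
    ∀ v, P v ↔ ∃ z : γ → M, ψ.Realize (Sum.elim Subtype.val (Sum.elim v z))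

namespace ExDefinable

theorem of_iff {P Q : (ι → M) → Prop} (h : ExDefinable L A P) (hPQ : ∀ v, P v ↔ Q v) :
    ExDefinable L A Q := by
  rwa [← funext fun v => propext (hPQ v)]

theorem of_isExistential {φ : L.Formula (A ⊕ ι)} (hφ : IsExistential φ) :
    ExDefinable L A fun v => φ.Realize (Sum.elim Subtype.val v) := by
  obtain ⟨n, ψ, hψ, rfl⟩ := hφ
  refine ⟨Fin n, inferInstance, ψ.toFormula.relabel (Equiv.sumAssoc _ _ _),
    hψ.toFormula.formula_relabel _, fun v => ?_⟩
  simp only [BoundedFormula.realize_exs, Formula.realize_relabel, BoundedFormula.realize_toFormula]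
  refine exists_congr fun z => Iff.of_eq ?_
  congr 1
  funext a
  cases a <;> rfl

theorem and {P Q : (ι → M) → Prop} (hP : ExDefinable L A P) (hQ : ExDefinable L A Q) :
    ExDefinable L A fun v => P v ∧ Q v := by
  obtain ⟨γ₁, _, ψ₁, hψ₁, hP⟩ := hP
  obtain ⟨γ₂, _, ψ₂, hψ₂, hQ⟩ := hQ
  refine ⟨γ₁ ⊕ γ₂, inferInstance,
    ψ₁.relabel (Sum.map id (Sum.map id Sum.inl)) ⊓ ψ₂.relabel (Sum.map id (Sum.map id Sum.inr)),
    (hψ₁.formula_relabel _).inf (hψ₂.formula_relabel _), fun v => ?_⟩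
  simp only [hP, hQ, Formula.realize_inf, Formula.realize_relabel, Sum.elim_comp_map,
    Function.comp_id, exists_sum_arrow_iff, Sum.elim_comp_inl, Sum.elim_comp_inr]
  exact exists_and_exists_comm

theorem exists_right {κ : Type} {P : (ι ⊕ κ → M) → Prop} [Finite κ] (hP : ExDefinable L A P) :
    ExDefinable L A fun v => ∃ w : κ → M, P (Sum.elim v w) := by
  obtain ⟨γ, _, ψ, hψ, hP⟩ := hP
  refine ⟨κ ⊕ γ, inferInstance, ψ.relabel (Sum.map id (Equiv.sumAssoc _ _ _)),
    hψ.formula_relabel _, fun v => ?_⟩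
  simp only [hP, Formula.realize_relabel, Sum.elim_comp_map, exists_sum_arrow_iff,
    Function.comp_id]
  refine exists_congr fun w => exists_congr fun z => Iff.of_eq ?_
  congr 2
  funext a
  rcases a with (a | a) | a <;> rfl

theorem comp {P : (ι → M) → Prop} (hP : ExDefinable L A P) (f : ι → κ) :
    ExDefinable L A fun v : κ → M => P (v ∘ f) := by
  obtain ⟨γ, _, ψ, hψ, hP⟩ := hP
  refine ⟨γ, inferInstance, ψ.relabel (Sum.map id (Sum.map f id)), hψ.formula_relabel _,
    fun v => ?_⟩
  simp only [hP, Formula.realize_relabel, Sum.elim_comp_map]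
  rfl

theorem const (p : Prop) : ExDefinable L A fun _ : ι → M => p := by
  by_cases hp : p
  · exact ⟨Empty, inferInstance, ⊤, BoundedFormula.IsQF.top, fun v => by simp [hp]⟩
  · exact ⟨Empty, inferInstance, ⊥, BoundedFormula.isQF_bot, fun v => by simp [hp]⟩

theorem const_imp {p : Prop} {P : (ι → M) → Prop} (hP : p → ExDefinable L A P) :
    ExDefinable L A fun v => p → P v := by
  by_cases hp : p
  · exact (hP hp).of_iff fun v => by simp [hp]
  · exact (const True).of_iff fun v => by simp [hp]

theorem finset_forall (s : Finset κ) {P : κ → (ι → M) → Prop}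
    (hP : ∀ i ∈ s, ExDefinable L A (P i)) : ExDefinable L A fun v => ∀ i ∈ s, P i v := by
  classical
  induction s using Finset.induction_on with
  | empty => exact (const True).of_iff fun v => by simp
  | insert i s _ ih =>
    exact ((hP i (s.mem_insert_self i)).and
      (ih fun j hj => hP j (Finset.mem_insert_of_mem hj))).of_iff fun v => by simp

theorem exists_isExistential {P : (ι → M) → Prop} (hP : ExDefinable L A P) :
    ∃ φ : L.Formula (A ⊕ ι), IsExistential φ ∧ ∀ v, φ.Realize (Sum.elim Subtype.val v) ↔ P v := by
  obtain ⟨γ, _, ψ, hψ, hP⟩ := hP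
  refine ⟨(ψ.relabel (Equiv.sumAssoc _ _ _).symm).iExs γ, ?_, fun v => ?_⟩
  · refine ⟨_, _, ?_, rfl⟩
    exact (hψ.formula_relabel _).relabel _
  rw [hP, Formula.realize_iExs]
  refine exists_congr fun z => Iff.of_eq ?_
  rw [Formula.realize_relabel]
  congr 1
  funext a
  rcases a with a | a | a <;> rfl

theorem term_eq (t₁ t₂ : L.Term ι) :
    ExDefinable L A fun v => t₁.realize v = t₂.realize v := by
  have hφ : ((t₁.relabel (Sum.inr : ι → A ⊕ ι)).equal (t₂.relabel Sum.inr)).IsQF :=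
    (BoundedFormula.IsAtomic.equal _ _).isQF
  exact (of_isExistential (IsExistential.of_isQF hφ)).of_iff fun v => by
    simp [Term.realize_relabel]

theorem term_ne (t₁ t₂ : L.Term ι) :
    ExDefinable L A fun v => t₁.realize v ≠ t₂.realize v := by
  have hφ : ((t₁.relabel (Sum.inr : ι → A ⊕ ι)).equal (t₂.relabel Sum.inr)).not.IsQF :=
    (BoundedFormula.IsAtomic.equal _ _).isQF.not
  exact (of_isExistential (IsExistential.of_isQF hφ)).of_iff fun v => by
    simp [Term.realize_relabel]

theorem comp_term {κ : Type} [Finite κ] {P : (κ → M) → Prop} (hP : ExDefinable L A P)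
    (t : κ → L.Term ι) : ExDefinable L A fun v => P fun i => (t i).realize v := by
  have := Fintype.ofFinite κ
  have hgraph : ExDefinable L A fun w : ι ⊕ κ → M =>
      (∀ i ∈ Finset.univ, w (Sum.inr i) = ((t i).relabel Sum.inl).realize w) ∧ P (w ∘ Sum.inr) :=
    (finset_forall _ fun i _ => term_eq (Term.var (Sum.inr i)) _).and (hP.comp Sum.inr)
  refine hgraph.exists_right.of_iff fun v => ⟨fun ⟨w, hw, hPw⟩ => ?_, fun hv => ⟨_, fun i _ => by
    rw [Term.realize_relabel, Sum.elim_comp_inl, Sum.elim_inr], hv⟩⟩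
  simp only [Term.realize_relabel, Sum.elim_comp_inl, Sum.elim_comp_inr, Finset.mem_univ,
    Sum.elim_inr, forall_const] at hw hPw
  rwa [← funext hw]

theorem infinite_of_notMem_laclE {P : (Fin 1 → M) → Prop} (hP : ExDefinable L A P) {b : M}
    (hb : P fun _ => b) (hbA : b ∉ LaclE L A) : {x | P fun _ => x}.Infinite := by
  obtain ⟨φ, hφ, hφP⟩ := hP.exists_isExistential
  refine fun hfin => hbA ⟨φ, hφ, ?_, (hφP _).2 hb⟩
  simpa only [hφP] using hfin

end ExDefinable

theorem exists_isExistential_realize (b : M) : ∃ φ : L.Formula (A ⊕ Fin 1), IsExistential φ ∧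
    φ.Realize (Sum.elim Subtype.val fun _ => b) ∧
    (b ∈ LaclE L A → {x | φ.Realize (Sum.elim Subtype.val fun _ => x)}.Finite) := by
  by_cases hb : b ∈ LaclE L A
  · obtain ⟨φ, hφ, hfin, hbφ⟩ := hb
    exact ⟨φ, hφ, hbφ, fun _ => hfin⟩
  · exact ⟨⊤, IsExistential.of_isQF BoundedFormula.IsQF.top,
      BoundedFormula.realize_top.2 trivial, fun h => absurd h hb⟩

end ExistentialDefinability

theorem exists_term_realize_eq_lift {G ι : Type*} [Group G] (w : FreeGroup ι) :
    ∃ t : grpLang.Term ι, ∀ v : ι → G, t.realize v = FreeGroup.lift v w := by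
  induction w using FreeGroup.induction_on with
  | C1 => exact ⟨Term.func GrpFunc.one ![], fun v => (map_one _).symm⟩
  | of i => exact ⟨Term.var i, fun v => by simp⟩
  | inv_of i ih =>
    obtain ⟨t, ht⟩ := ih
    exact ⟨Term.func GrpFunc.inv ![t], fun v => by rw [map_inv, ← ht]; rfl⟩
  | mul w w' ih ih' =>
    obtain ⟨t, ht⟩ := ih
    obtain ⟨t', ht'⟩ := ih'
    exact ⟨Term.func GrpFunc.mul ![t, t'], fun v => by rw [map_mul, ← ht, ← ht']; rfl⟩

namespace ExDefinable

variable {G ι : Type*} [Group G] {A : Set G}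

theorem lift_eq (w w' : FreeGroup ι) :
    ExDefinable grpLang A fun v : ι → G => FreeGroup.lift v w = FreeGroup.lift v w' := by
  obtain ⟨t, ht⟩ := exists_term_realize_eq_lift (G := G) w
  obtain ⟨t', ht'⟩ := exists_term_realize_eq_lift (G := G) w'
  exact (term_eq t t').of_iff fun v => by rw [ht, ht']

theorem lift_ne (w w' : FreeGroup ι) :
    ExDefinable grpLang A fun v : ι → G => FreeGroup.lift v w ≠ FreeGroup.lift v w' := by
  obtain ⟨t, ht⟩ := exists_term_realize_eq_lift (G := G) w
  obtain ⟨t', ht'⟩ := exists_term_realize_eq_lift (G := G) w'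
  exact (term_ne t t').of_iff fun v => by rw [ht, ht']

theorem realize_lift {φ : grpLang.Formula (A ⊕ Fin 1)} (hφ : IsExistential φ)
    (w : FreeGroup ι) :
    ExDefinable grpLang A fun v : ι → G =>
      φ.Realize (Sum.elim Subtype.val fun _ => FreeGroup.lift v w) := by
  obtain ⟨t, ht⟩ := exists_term_realize_eq_lift (G := G) w
  exact ((of_isExistential hφ).comp_term fun _ => t).of_iff fun v => by simp only [ht]

end ExDefinable

section EquationallyNoetherian

variable {G : Type*} [Group G]

theorem FreeGroup.lift_map_apply {α β : Type*} (f : α → β) (y : β → G) (w : FreeGroup α) :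
    FreeGroup.lift y (FreeGroup.map f w) = FreeGroup.lift (y ∘ f) w := by
  rw [← MonoidHom.comp_apply]
  congr 1
  exact FreeGroup.ext_hom _ _ fun a => by simp

theorem EqNoetherian.exists_finset_forall {α : Type*} [Finite α] (hEN : EqNoetherian G)
    (S : Set (FreeGroup α)) :
    ∃ S₀ : Finset (FreeGroup α), ↑S₀ ⊆ S ∧ ∀ y : α → G,
      (∀ s ∈ S₀, FreeGroup.lift y s = 1) → ∀ s ∈ S, FreeGroup.lift y s = 1 := by
  obtain ⟨n, ⟨e⟩⟩ := Finite.exists_equiv_fin α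
  -- a spare variable makes the number of unknowns positive
  set ι : α → Fin (n + 1) := Fin.castSucc ∘ e
  have hι : ι.Injective := (Fin.castSucc_injective n).comp e.injective
  set emb : FreeGroup α →* Monoid.Coprod G (FreeGroup (Fin (n + 1))) :=
    Monoid.Coprod.inr.comp (FreeGroup.map ι)
  have hemb : Function.Injective emb :=
    Monoid.Coprod.inr_injective.comp (FreeGroup.map_injective hι)
  obtain ⟨T, hTS, hTfin, hT⟩ := hEN (n + 1) n.succ_pos (emb '' S)
  refine ⟨(hTfin.preimage hemb.injOn).toFinset, fun s hs => ?_, fun y hy => ?_⟩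
  · obtain ⟨s', hs', he⟩ := hTS ((hTfin.preimage hemb.injOn).mem_toFinset.1 hs)
    exact hemb he ▸ hs'
  · set f := Monoid.Coprod.lift (MonoidHom.id G) (FreeGroup.lift (Function.extend ι y 1))
    have hf : ∀ s, f (emb s) = FreeGroup.lift y s := fun s => by
      simp only [f, emb, MonoidHom.comp_apply, Monoid.Coprod.lift_apply_inr,
        FreeGroup.lift_map_apply, Function.extend_comp hι]
    have hfT := (hT f (Monoid.Coprod.lift_comp_inl _ _)).1 fun t ht => by
      obtain ⟨s, -, rfl⟩ := hTS ht
      rw [hf]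
      exact hy s ((hTfin.preimage hemb.injOn).mem_toFinset.2 ht)
    exact fun s hs => hf s ▸ hfT _ ⟨s, hs, rfl⟩

theorem EqNoetherian.exists_finset_relators (hEN : EqNoetherian G) {K : Subgroup G}
    (hK : K.FG) :
    ∃ (α : Type) (_ : Finite α) (π : FreeGroup α →* K) (R : Finset (FreeGroup α)),
      Function.Surjective π ∧ (∀ r ∈ R, π r = 1) ∧
      ∀ y : α → G, (∀ r ∈ R, FreeGroup.lift y r = 1) →
        ∃ h : K →* G, ∀ w, h (π w) = FreeGroup.lift y w := by
  obtain ⟨α, _, π, hπ⟩ :=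
    Group.fg_iff_exists_freeGroup_hom_surjective_finite.1 ((Group.fg_iff_subgroup_fg K).2 hK)
  obtain ⟨R, hRπ, hR⟩ := hEN.exists_finset_forall (π.ker : Set (FreeGroup α))
  refine ⟨α, inferInstance, π, R, hπ, fun r hr => hRπ hr, fun y hy => ?_⟩
  have hker : π.ker ≤ (FreeGroup.lift y).ker := hR y hy
  exact ⟨π.liftOfSurjective hπ ⟨_, hker⟩, fun w => π.liftOfRightInverse_comp_apply _ _ _ w⟩

end EquationallyNoetherian

theorem Subgroup.FG.countable {G : Type*} [Group G] {K : Subgroup G} (hK : K.FG) :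
    Countable K := by
  obtain ⟨α, _, π, hπ⟩ :=
    Group.fg_iff_exists_freeGroup_hom_surjective_finite.1 ((Group.fg_iff_subgroup_fg K).2 hK)
  exact hπ.countable

theorem exists_injective_forall_mem_of_infinite {α : Type*} {S : ℕ → Set α}
    (hS : ∀ n, (S n).Infinite) : ∃ x : ℕ → α, Function.Injective x ∧ ∀ n, x n ∈ S n := by
  classical
  choose F hFS hFt using fun n (t : Finset α) => (hS n).exists_notMem_finset t
  let used : ℕ → Finset α := fun n => Nat.rec ∅ (fun k t => insert (F k t) t) n
  have used_mono : Monotone used :=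
    monotone_nat_of_le_succ fun n => Finset.subset_insert _ (used n)
  have hfresh : ∀ i j, i < j → F i (used i) ≠ F j (used j) := fun i j hij hEq =>
    hFt j (used j) (hEq ▸ used_mono hij (Finset.mem_insert_self _ _))
  refine ⟨fun n => F n (used n), fun i j hij => ?_, fun n => hFS n _⟩
  by_contra hne
  rcases Ne.lt_or_gt hne with h | h
  exacts [hfresh i j h hij, hfresh j i h hij.symm]

section Homomorphisms

variable {G : Type*} [Group G] {A : Set G}

def RespectsOn {H : Type*} [Group H] (φ : H → grpLang.Formula (A ⊕ Fin 1)) (T : Finset H)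
    (h : H →* G) : Prop :=
  ∀ k ∈ T, (k ≠ 1 → h k ≠ 1) ∧ (φ k).Realize (Sum.elim Subtype.val fun _ => h k)

theorem infinite_setOf_respectsOn_apply (hEN : EqNoetherian G) {K : Subgroup G} (hK : K.FG)
    {φ : K → grpLang.Formula (A ⊕ Fin 1)} (hφ : ∀ k, IsExistential (φ k)) {T : Finset K}
    (hφK : RespectsOn φ T K.subtype) {b : K} (hbA : (b : G) ∉ aclE A) :
    {x | ∃ h : K →* G, RespectsOn φ T h ∧ h b = x}.Infinite := by
  obtain ⟨α, _, π, R, hπ, hRπ, hlift⟩ := hEN.exists_finset_relators hK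
  choose wd hwd using hπ
  let Q : (α → G) → Prop := fun y => (∀ r ∈ R, FreeGroup.lift y r = 1) ∧
    ∀ k ∈ T, (k ≠ 1 → FreeGroup.lift y (wd k) ≠ 1) ∧
      (φ k).Realize (Sum.elim Subtype.val fun _ => FreeGroup.lift y (wd k))
  have hQ : ExDefinable grpLang A Q :=
    ((ExDefinable.finset_forall R fun r _ => ExDefinable.lift_eq r 1).and
      (ExDefinable.finset_forall T fun k _ =>
        (ExDefinable.const_imp (p := k ≠ 1) fun _ => ExDefinable.lift_ne (wd k) 1).and
          (ExDefinable.realize_lift (hφ k) (wd k)))).of_iff fun y => by simp only [map_one, Q]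
  have hS : ExDefinable grpLang A fun v : Fin 1 → G =>
      ∃ y, Q y ∧ v 0 = FreeGroup.lift y (wd b) :=
    ((hQ.comp Sum.inr).and (ExDefinable.lift_eq (FreeGroup.of (Sum.inl 0))
      (FreeGroup.map Sum.inr (wd b)))).exists_right.of_iff fun v => by
        simp only [FreeGroup.lift_map_apply, FreeGroup.lift_apply_of, Sum.elim_comp_inr,
          Sum.elim_inl]
  set y₀ : α → G := fun i => π (FreeGroup.of i)
  have hy₀ : ∀ w, FreeGroup.lift y₀ w = π w := fun w =>
    DFunLike.congr_fun (FreeGroup.ext_hom (FreeGroup.lift y₀) (K.subtype.comp π)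
      fun a => by simp [y₀]) w
  have hbS : ∃ y, Q y ∧ (b : G) = FreeGroup.lift y (wd b) :=
    ⟨y₀, ⟨fun r hr => by rw [hy₀, hRπ r hr]; rfl,
      fun k hk => by simpa only [hy₀, hwd, Subgroup.coe_subtype] using hφK k hk⟩,
      by rw [hy₀, hwd]⟩
  refine (hS.infinite_of_notMem_laclE hbS hbA).mono ?_
  rintro x ⟨y, ⟨hyR, hyT⟩, rfl⟩
  obtain ⟨h, hh⟩ := hlift y hyR
  have hhk : ∀ k, h k = FreeGroup.lift y (wd k) := fun k => by rw [← hh, hwd]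
  exact ⟨h, fun k hk => by simpa only [hhk] using hyT k hk, hhk b⟩

end Homomorphisms

theorem exists_finset_eventually_mem (α : Type*) [Countable α] [Nonempty α] :
    ∃ T : ℕ → Finset α, ∀ a, ∀ᶠ n in atTop, a ∈ T n := by
  classical
  obtain ⟨c, hc⟩ := exists_surjective_nat α
  refine ⟨fun n => (Finset.range n).image c, fun a => ?_⟩
  obtain ⟨j, rfl⟩ := hc a
  exact eventually_atTop.2 ⟨j + 1, fun n hn =>
    Finset.mem_image_of_mem c (Finset.mem_range.2 (by omega))⟩

section StableSequences

variable {K H : Type*} [Group K] [Group H] {h : ℕ → (K →* H)}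

theorem StableSeq.of_eventually_ne_one (hne : ∀ k ≠ 1, ∀ᶠ n in atTop, h n k ≠ 1) :
    StableSeq h := fun k => by
  rcases eq_or_ne k 1 with rfl | hk
  exacts [Or.inl (Eventually.of_forall fun n => map_one _), Or.inr (hne k hk)]

theorem TrivialStableKernel.of_eventually_ne_one (hne : ∀ k ≠ 1, ∀ᶠ n in atTop, h n k ≠ 1) :
    TrivialStableKernel h := fun k hk => by
  by_contra hk1
  obtain ⟨n, hn1, hn⟩ := (hk.and (hne k hk1)).exists
  exact hn hn1

end StableSequences

theorem exists_stable_sequence_bounding_aclE_general {G : Type*} [Group G]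
    (hEN : EqNoetherian G) (A : Subgroup G)
    (K : Subgroup G) (hK : K.FG)
    (hsub : aclE (A : Set G) ⊆ (K : Set G)) (hne : aclE (A : Set G) ≠ (K : Set G)) :
    ∃ h : ℕ → (↥K →* G),
      (∀ m n : ℕ, m ≠ n → h m ≠ h n) ∧
      StableSeq h ∧ TrivialStableKernel h ∧
      (∀ k : ↥K, (k : G) ∈ aclE (A : Set G) →
        ∃ B : Finset G, ∀ᶠ n in Filter.atTop, h n k ∈ B) := by
  obtain ⟨b, hbK, hbA⟩ := Set.exists_of_ssubset (ssubset_of_subset_of_ne hsub hne)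
  choose φ hφ hφK hφfin using fun k : K =>
    exists_isExistential_realize (L := grpLang) (A := (A : Set G)) (k : G)
  have := hK.countable
  obtain ⟨T, hT⟩ := exists_finset_eventually_mem K
  obtain ⟨x, hx_inj, hx⟩ := exists_injective_forall_mem_of_infinite fun n =>
    infinite_setOf_respectsOn_apply hEN hK hφ (T := T n)
      (fun k _ => ⟨fun hk => by simpa using hk, hφK k⟩) (b := ⟨b, hbK⟩) hbA
  choose h hhT hhb using hx
  have hne1 : ∀ k ≠ 1, ∀ᶠ n in atTop, h n k ≠ 1 := fun k hk =>
    (hT k).mono fun n hn => (hhT n k hn).1 hk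
  refine ⟨h, fun m n hmn hh => hmn (hx_inj (by rw [← hhb, ← hhb, hh])),
    .of_eventually_ne_one hne1, .of_eventually_ne_one hne1, fun k hk => ⟨(hφfin k hk).toFinset,
      (hT k).mono fun n hn => (hφfin k hk).mem_toFinset.2 (hhT n k hn).2⟩⟩

/-- Let `G` be a finitely generated equationally noetherian group and
`A` a subgroup of `G`. Let `K` be a finitely generated subgroup of `G` such that
`acl^∃(A)` is a proper subgroup of `K`. Then there exists a stable sequence of pairwise
distinct homomorphisms `hₙ : K → G` with trivial stable kernel which bounds `acl^∃(A)`
in the limit. -/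
theorem exists_stable_sequence_bounding_aclE {G : Type*} [Group G] [Group.FG G]
    (hEN : EqNoetherian G) (A : Subgroup G)
    (K : Subgroup G) (hK : K.FG)
    (hsub : aclE (A : Set G) ⊆ (K : Set G)) (hne : aclE (A : Set G) ≠ (K : Set G)) :
    ∃ h : ℕ → (↥K →* G),
      (∀ m n : ℕ, m ≠ n → h m ≠ h n) ∧
      StableSeq h ∧ TrivialStableKernel h ∧
      (∀ k : ↥K, (k : G) ∈ aclE (A : Set G) →
        ∃ B : Finset G, ∀ᶠ n in Filter.atTop, h n k ∈ B) :=
  exists_stable_sequence_bounding_aclE_general hEN A K hK hsub hne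
end

section
/- Let G be a finitely generated equationally noetherian group, let G* be an elementary extension of G (in the language of groups), and let C be a finitely generated subgroup of G*. Then there exists a stable sequence of group homomorphisms (fₙ : C → G) with trivial stable kernel which strongly converges to C. -/
open FirstOrder Filter

/-! Write `C` as the image of a free group `F_k` under `π`. Since `G` is elementary in `G*`, every
finite system of equations and inequations over `G` that the generators of `C` satisfy in `G*` has a
solution in `G`; diagonalising yields homomorphisms `ψ n : F_k → G` such that each statement
`w = b` (`w ∈ F_k`, `b ∈ G`) eventually holds for `ψ n` iff it holds for `π`. Equational
noetherianity reduces the relations of `C` to finitely many, so from some point on `ψ n` factors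
through `π`, and the eventual agreement of these statements is exactly strong convergence. -/

open FirstOrder Language

section WordTerms

variable {α : Type*}

def termOfList : List (α × Bool) → grpLang.Term α
  | [] => Term.func GrpFunc.one ![]
  | (a, true) :: l => Term.func GrpFunc.mul ![Term.var a, termOfList l]
  | (a, false) :: l => Term.func GrpFunc.mul ![Term.func GrpFunc.inv ![Term.var a], termOfList l]

def termOfWord [DecidableEq α] (w : FreeGroup α) : grpLang.Term α := termOfList w.toWord

variable {M : Type*} [Group M]

theorem realize_termOfList (v : α → M) (l : List (α × Bool)) :
    (termOfList l).realize v = FreeGroup.lift v (FreeGroup.mk l) := by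
  rw [FreeGroup.lift_mk]
  induction l with
  | nil => rfl
  | cons x l ih =>
    obtain ⟨a, _ | _⟩ := x <;>
      simp only [termOfList, List.map_cons, List.prod_cons, ← ih] <;> rfl

theorem realize_termOfWord [DecidableEq α] (v : α → M) (w : FreeGroup α) :
    (termOfWord w).realize v = FreeGroup.lift v w := by
  rw [termOfWord, realize_termOfList, FreeGroup.mk_toWord]

end WordTerms

section Systems

variable {ι : Type*} [Finite ι] {k : ℕ}

noncomputable def solvableFormula (w : ι → FreeGroup (Fin k)) (s : ι → Prop) [DecidablePred s] :
    grpLang.Formula ι :=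
  (BoundedFormula.iInf fun i =>
    let eqn : grpLang.BoundedFormula ι k :=
      ((termOfWord (w i)).relabel Sum.inr).bdEqual (Term.var (Sum.inl i))
    if s i then eqn else eqn.not).exs

theorem realize_solvableFormula {M : Type*} [Group M] (w : ι → FreeGroup (Fin k)) (s : ι → Prop)
    [DecidablePred s] (v : ι → M) :
    (solvableFormula w s).Realize v ↔
      ∃ xs : Fin k → M, ∀ i, (FreeGroup.lift xs (w i) = v i ↔ s i) := by
  rw [solvableFormula, BoundedFormula.realize_exs]
  refine exists_congr fun xs => BoundedFormula.realize_iInf.trans (forall_congr' fun i => ?_)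
  have realize_eqn : (FreeGroup.lift xs (w i) = v i) ↔
      (((termOfWord (w i)).relabel Sum.inr).bdEqual (Term.var (Sum.inl i)) :
        grpLang.BoundedFormula ι k).Realize v xs := by
    simp only [BoundedFormula.realize_bdEqual, Term.realize_relabel, Sum.elim_comp_inr,
      realize_termOfWord, Term.realize_var, Sum.elim_inl]
  split_ifs with hs <;> simp only [hs, BoundedFormula.realize_not, ← realize_eqn, iff_true,
    iff_false]

end Systems

section Elementary

variable {H K : Type*} [Group H] [Group K] {e : H →* K}

theorem ElementaryEmb.realize_iff (he : ElementaryEmb e) {ι : Type*} [Finite ι]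
    (φ : grpLang.Formula ι) (v : ι → H) : φ.Realize (e ∘ v) ↔ φ.Realize v := by
  obtain ⟨n, ⟨σ⟩⟩ := Finite.exists_equiv_fin ι
  simpa [Formula.realize_relabel, Function.comp_def] using he n (φ.relabel σ) (v ∘ σ.symm)

theorem ElementaryEmb.exists_hom_eq_iff {k : ℕ} (he : ElementaryEmb e)
    (φ : FreeGroup (Fin k) →* K) (F : Finset (FreeGroup (Fin k) × H)) :
    ∃ ψ : FreeGroup (Fin k) →* H, ∀ p ∈ F, (ψ p.1 = p.2 ↔ φ p.1 = e p.2) := by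
  classical
  let w (p : F) : FreeGroup (Fin k) := p.1.1
  let s (p : F) : Prop := φ p.1.1 = e p.1.2
  have hK : (solvableFormula w s).Realize (e ∘ fun p => p.1.2) := by
    rw [realize_solvableFormula]
    exact ⟨FreeGroup.lift.symm φ, fun p => by simp [w, s]⟩
  obtain ⟨xs, hxs⟩ := (realize_solvableFormula w s _).1 ((he.realize_iff _ _).1 hK)
  exact ⟨FreeGroup.lift xs, fun p hp => hxs ⟨p, hp⟩⟩

/-- At stage `n`, solve the system given by the first `n + 1` pairs of an enumeration of
`FreeGroup (Fin k) × H`. -/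
theorem ElementaryEmb.exists_seq_eventually_eq_iff [Countable H] {k : ℕ} (he : ElementaryEmb e)
    (φ : FreeGroup (Fin k) →* K) :
    ∃ ψ : ℕ → FreeGroup (Fin k) →* H, ∀ w b, ∀ᶠ n in atTop, (ψ n w = b ↔ φ w = e b) := by
  classical
  obtain ⟨ρ, hρ⟩ := exists_surjective_nat (FreeGroup (Fin k) × H)
  choose ψ hψ using fun n => he.exists_hom_eq_iff φ ((Finset.range (n + 1)).image ρ)
  refine ⟨ψ, fun w b => ?_⟩
  obtain ⟨i, hi⟩ := hρ (w, b)
  filter_upwards [eventually_ge_atTop i] with n hn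
  exact hψ n (w, b) (Finset.mem_image.2 ⟨i, Finset.mem_range.2 (Nat.lt_succ_of_le hn), hi⟩)

end Elementary

theorem EqNoetherian.eventually_forall_mem {H : Type*} [Group H] (hH : EqNoetherian H) {k : ℕ}
    (W : Set (FreeGroup (Fin k))) (ψ : ℕ → FreeGroup (Fin k) →* H)
    (hψ : ∀ w ∈ W, ∀ᶠ n in atTop, ψ n w = 1) : ∀ᶠ n in atTop, ∀ w ∈ W, ψ n w = 1 := by
  -- `EqNoetherian` only speaks about `k > 0`; over `Fin 0` every word is trivial.
  rcases Nat.eq_zero_or_pos k with rfl | hk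
  · exact .of_forall fun n w _ => by rw [Subsingleton.elim w 1, map_one]
  obtain ⟨S₀, hS₀W, hS₀, hS₀_iff⟩ := hH k hk (Monoid.Coprod.inr '' W)
  have hW₀ : (Monoid.Coprod.inr ⁻¹' S₀ ∩ W).Finite :=
    (hS₀.preimage Monoid.Coprod.inr_injective.injOn).inter_of_left W
  filter_upwards [(eventually_all_finite hW₀).2 fun w hw => hψ w hw.2] with n hn
  have solves : ∀ s ∈ Monoid.Coprod.inr '' W, Monoid.Coprod.lift (MonoidHom.id H) (ψ n) s = 1 := by
    refine (hS₀_iff _ (Monoid.Coprod.lift_comp_inl _ _)).1 fun s hs => ?_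
    obtain ⟨w, hw, rfl⟩ := hS₀W hs
    simpa using hn w ⟨hs, hw⟩
  exact fun w hw => by simpa using solves _ ⟨w, hw, rfl⟩

theorem Group.FG.countable {H : Type*} [Group H] (h : Group.FG H) : Countable H := by
  obtain ⟨α, _, π, hπ⟩ := Group.fg_iff_exists_freeGroup_hom_surjective_finite.1 h
  exact hπ.countable

theorem Group.FG.exists_freeGroup_fin_surjective {H : Type*} [Group H] (h : Group.FG H) :
    ∃ (k : ℕ) (π : FreeGroup (Fin k) →* H), Function.Surjective π := by
  obtain ⟨α, _, π, hπ⟩ := Group.fg_iff_exists_freeGroup_hom_surjective_finite.1 h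
  obtain ⟨k, ⟨σ⟩⟩ := Finite.exists_equiv_fin α
  let σ' := FreeGroup.freeGroupCongr σ
  exact ⟨k, π.comp σ'.symm.toMonoidHom, hπ.comp σ'.symm.surjective⟩

theorem stronglyConverges_of_eventually_eq_iff {H Gs : Type*} [Group H] [Group Gs] {e : H →* Gs}
    {D : Subgroup Gs} {f : ℕ → D →* H}
    (hf : ∀ d b, ∀ᶠ n in atTop, (f n d = b ↔ (d : Gs) = e b)) : StronglyConverges e D f := by
  have eq_of_frequently (d : D) (b : H) (h : ∃ᶠ n in atTop, f n d = b) : (d : Gs) = e b := by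
    obtain ⟨n, hfn, hn⟩ := (h.and_eventually (hf d b)).exists
    exact hn.1 hfn
  refine ⟨fun d => ?_, fun d hd => ?_, fun d b hdb => (hf d b).mono fun n hn => hn.2 hdb,
    eq_of_frequently⟩
  · by_cases hd : (d : Gs) = 1
    · exact .inl ((hf d 1).mono fun n hn => hn.2 (by simpa using hd))
    · exact .inr ((hf d 1).mono fun n hn hfn => hd (by simpa using hn.1 hfn))
  · simpa using eq_of_frequently d 1 hd.frequently

/-- Let `G` be a finitely generated equationally noetherian group,
`G*` an elementary extension of `G` and `C` a finitely generated subgroup of `G*`. Then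
there exists a stable sequence of homomorphisms `fₙ : C → G` with trivial stable kernel
which strongly converges to `C`. (Here `G` is realized as a subgroup of `G*` whose
inclusion is elementary.) -/
theorem exists_strongly_converging_sequence {Gs : Type*} [Group Gs] (G : Subgroup Gs)
    (hfg : Group.FG ↥G) (hel : ElementarySub G) (hEN : EqNoetherian ↥G)
    (C : Subgroup Gs) (hC : C.FG) :
    ∃ f : ℕ → (↥C →* ↥G), StronglyConverges G.subtype C f := by
  obtain ⟨k, π, hπ⟩ := ((Group.fg_iff_subgroup_fg C).2 hC).exists_freeGroup_fin_surjective
  have := hfg.countable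
  obtain ⟨ψ, hψ⟩ := hel.exists_seq_eventually_eq_iff (C.subtype.comp π)
  obtain ⟨N, hN⟩ := eventually_atTop.1 <| hEN.eventually_forall_mem π.ker ψ
    fun w hw => (hψ w 1).mono fun n hn => hn.2 (by simp [π.mem_ker.1 hw])
  have hker (n : ℕ) : π.ker ≤ (ψ (n + N)).ker := hN (n + N) (Nat.le_add_left N n)
  refine ⟨fun n => π.liftOfSurjective hπ ⟨ψ (n + N), hker n⟩,
    stronglyConverges_of_eventually_eq_iff fun d b => ?_⟩
  obtain ⟨w, rfl⟩ := hπ d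
  simpa using (tendsto_add_atTop_nat N).eventually (hψ w b)
end

section
/- Let L be a first-order language, M an L-structure, A a subset of M, and ā, b̄ ∈ Mⁿ. Then tp^∃(ā/A) ⊆ tp^∃(b̄/A) if and only if there exist an elementary extension N of M and an L-embedding f : N → N fixing A pointwise and sending ā to b̄. -/
open FirstOrder Filter

universe u

/-!
If `f ∘ g` agrees with `g` on `A` and sends `ā` to `g b̄`, an existential formula true of `ā` in
`M` goes up along the elementary `g`, forward along the embedding `f` and back down along `g`.

Conversely, let `tp∃(c̄) ⊆ tp∃(d̄)` in `M`. For every quantifier-free `χ(c̄, m̄)` true in `M`,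
the existential formula `∃ x̄, χ(d̄, x̄)` holds, so the sets `{h : M → M | χ(d̄, h m̄)}` have the
finite intersection property. In the ultrapower of `M` along an ultrafilter containing them,
`p ↦ [h ↦ h p]` preserves the quantifier-free diagram of `M`, hence is an embedding, and it sends
`c̄` to the diagonal image of `d̄`. Applying this to an elementary embedding `e` and an embedding
`f` of `Q` into `P` (where `tp∃(e) ⊆ tp∃(f)` automatically) extends `f` to `P` compatibly with
`e`. Iterating from `M` yields an elementary chain `M ≺ M₁ ≺ M₂ ≺ ⋯` with embeddings
`fₙ : Mₙ → Mₙ₊₁` commuting with the chain maps; in the union, an elementary extension of `M`,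
the `fₙ` glue to the required self-embedding.
-/

namespace FirstOrder.Language

variable {L : FirstOrder.Language} {M N P : Type*} [L.Structure M] [L.Structure N] [L.Structure P]
  {α β γ : Type*}

theorem BoundedFormula.IsQF.restrictFreeVar [DecidableEq α] {n : ℕ}
    {φ : L.BoundedFormula α n} (h : φ.IsQF) (f : φ.freeVarFinset → β) :
    (φ.restrictFreeVar f).IsQF := by
  induction h with
  | falsum => exact isQF_bot
  | of_isAtomic h =>
    cases h with
    | equal => exact (BoundedFormula.IsAtomic.equal _ _).isQF
    | rel => exact (BoundedFormula.IsAtomic.rel _ _).isQF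
  | imp _ _ ih₁ ih₂ => exact (ih₁ _).imp (ih₂ _)

theorem BoundedFormula.IsQF.isExistential_iExs [Finite β] {φ : L.Formula (α ⊕ β)}
    (h : φ.IsQF) : _root_.IsExistential (φ.iExs β) :=
  ⟨_, _, h.relabel _, rfl⟩

variable (L) in
def ExistentialTypeSubset (c : γ → M) (d : γ → N) : Prop :=
  ∀ φ : L.Formula γ, IsExistential φ → φ.Realize c → φ.Realize d

theorem ExistentialTypeSubset.trans {c : γ → M} {d : γ → N} {e : γ → P}
    (h₁ : ExistentialTypeSubset L c d) (h₂ : ExistentialTypeSubset L d e) :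
    ExistentialTypeSubset L c e :=
  fun φ hφ h => h₂ φ hφ (h₁ φ hφ h)

theorem Embedding.existentialTypeSubset_comp (f : M ↪[L] N) (c : γ → M) :
    ExistentialTypeSubset L c (f ∘ c) := by
  rintro _ ⟨n, ψ, hψ, rfl⟩ h
  obtain ⟨xs, hxs⟩ := BoundedFormula.realize_exs.1 h
  exact BoundedFormula.realize_exs.2 ⟨f ∘ xs, (hψ.realize_embedding f).2 hxs⟩

theorem ElementaryEmbedding.comp_existentialTypeSubset (f : M ↪ₑ[L] N) (c : γ → M) :
    ExistentialTypeSubset L (f ∘ c) c :=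
  fun φ _ => (f.map_formula φ c).1

theorem existentialTypeSubset_elementaryEmbedding_embedding (e : M ↪ₑ[L] N) (f : M ↪[L] N) :
    ExistentialTypeSubset L e f :=
  (e.comp_existentialTypeSubset id).trans (f.existentialTypeSubset_comp id)

theorem ExistentialTypeSubset.exists_realize_of_isQF {c d : γ → M}
    (h : ExistentialTypeSubset L c d) {χ : L.Formula (γ ⊕ β)} (hχ : χ.IsQF) {p : β → M}
    (hp : χ.Realize (Sum.elim c p)) : ∃ q : β → M, χ.Realize (Sum.elim d q) := by
  classical
  -- `χ` has only finitely many free variables; quantify existentially over those from `β`.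
  let β' := χ.freeVarFinset.preimage Sum.inr Sum.inr_injective.injOn
  let restrict : χ.freeVarFinset → γ ⊕ β'
    | ⟨.inl g, _⟩ => .inl g
    | ⟨.inr b, hb⟩ => .inr ⟨b, Finset.mem_preimage.2 hb⟩
  let χ' : L.Formula (γ ⊕ β') := χ.restrictFreeVar restrict
  have realize_χ' (c : γ → M) (q : β → M) :
      χ'.Realize (Sum.elim c (q ∘ Subtype.val)) ↔ χ.Realize (Sum.elim c q) :=
    BoundedFormula.realize_restrictFreeVar _ (by rintro ⟨_ | _, _⟩ <;> rfl)
  have hc : (χ'.iExs β').Realize c := Formula.realize_iExs.2 ⟨_, (realize_χ' c p).2 hp⟩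
  obtain ⟨q', hq'⟩ := Formula.realize_iExs.1 (h _ (hχ.restrictFreeVar _).isExistential_iExs hc)
  refine ⟨fun b => if hb : b ∈ β' then q' ⟨b, hb⟩ else p b, (realize_χ' d _).1 ?_⟩
  convert hq' using 3
  ext ⟨b, hb⟩
  simp [hb]

def Embedding.ofRealizeQF (φ : M → N)
    (hφ : ∀ χ : L.Formula M, χ.IsQF → χ.Realize id → χ.Realize φ) : M ↪[L] N where
  toFun := φ
  inj' x y hxy := by
    by_contra hne
    have := hφ (Term.equal (var x) (var y)).not (BoundedFormula.IsAtomic.equal _ _).isQF.not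
      (by simpa using hne)
    simp_all
  map_fun' {n} F xs := by
    have := hφ (Term.equal (func F fun i => var (xs i)) (var (Structure.funMap F xs)))
      (BoundedFormula.IsAtomic.equal _ _).isQF (by simp)
    simpa [Function.comp_def] using this.symm
  map_rel' {n} R xs := by
    by_cases hR : Structure.RelMap R xs
    · have := hφ (R.formula fun i => var (xs i)) (BoundedFormula.IsAtomic.rel _ _).isQF
        (by simpa using hR)
      simpa [Function.comp_def, hR] using this
    · have := hφ (R.formula fun i => var (xs i)).not (BoundedFormula.IsAtomic.rel _ _).isQF.not
        (by simpa using hR)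
      simpa [Function.comp_def, hR] using this

variable (L) in
def ultrapowerDiagonal {I : Type*} (U : Ultrafilter I) (M : Type*) [L.Structure M]
    [Nonempty M] : M ↪ₑ[L] (U : Filter I).Product fun _ => M where
  toFun p := ((fun _ => p : I → M) : (U : Filter I).Product fun _ => M)
  map_formula' _ φ v := by
    change (φ.Realize fun i => ((fun _ => v i : I → M) : (U : Filter I).Product fun _ => M)) ↔ _
    rw [Ultraproduct.realize_formula_cast]
    simp

variable (L) in
def transferFilterBasis (c d : γ → M) : FilterBasis (M → M) where
  sets := {S | ∃ χ : L.Formula (γ ⊕ M), χ.IsQF ∧ χ.Realize (Sum.elim c id) ∧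
    S = {h | χ.Realize (Sum.elim d h)}}
  nonempty := ⟨_, ⊤, BoundedFormula.IsQF.top, by simp, rfl⟩
  inter_sets := by
    rintro _ _ ⟨χ₁, hχ₁, hc₁, rfl⟩ ⟨χ₂, hχ₂, hc₂, rfl⟩
    exact ⟨_, ⟨χ₁ ⊓ χ₂, hχ₁.inf hχ₂, by simp [hc₁, hc₂], rfl⟩, fun _ => Formula.realize_inf.1⟩

section Ultrapower

variable {c d : γ → M}

theorem ExistentialTypeSubset.neBot_transferFilter (h : ExistentialTypeSubset L c d) :
    (transferFilterBasis L c d).filter.NeBot :=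
  (transferFilterBasis L c d).hasBasis.neBot_iff.2 fun ⟨_, hχ, hc, hS⟩ =>
    hS ▸ h.exists_realize_of_isQF hχ hc

noncomputable def ExistentialTypeSubset.ultrafilter (h : ExistentialTypeSubset L c d) :
    Ultrafilter (M → M) :=
  @Ultrafilter.of _ _ h.neBot_transferFilter

abbrev ExistentialTypeSubset.Ultrapower (h : ExistentialTypeSubset L c d) : Type _ :=
  (h.ultrafilter : Filter (M → M)).Product fun _ => M

theorem ExistentialTypeSubset.eventually_realize (h : ExistentialTypeSubset L c d)
    {χ : L.Formula (γ ⊕ M)} (hχ : χ.IsQF) (hc : χ.Realize (Sum.elim c id)) :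
    ∀ᶠ g in (h.ultrafilter : Filter (M → M)), χ.Realize (Sum.elim d g) :=
  @Ultrafilter.of_le _ _ h.neBot_transferFilter _
    ((transferFilterBasis L c d).mem_filter_of_mem ⟨χ, hχ, hc, rfl⟩)

variable [Nonempty M]

noncomputable def ExistentialTypeSubset.embedding (h : ExistentialTypeSubset L c d) :
    M ↪[L] h.Ultrapower :=
  Embedding.ofRealizeQF (fun p => ((fun g => g p : (M → M) → M) : h.Ultrapower))
    fun χ hχ hid => by
      refine (Ultraproduct.realize_formula_cast _ _).2 ?_
      simpa [Formula.realize_relabel] using h.eventually_realize (χ := χ.relabel Sum.inr)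
        (hχ.relabel _) (by simpa [Formula.realize_relabel])

theorem ExistentialTypeSubset.embedding_apply (h : ExistentialTypeSubset L c d) (i : γ) :
    h.embedding (c i) = ultrapowerDiagonal L h.ultrafilter M (d i) :=
  Quotient.sound' <| h.eventually_realize (χ := Term.equal (var (.inr (c i))) (var (.inl i)))
    (BoundedFormula.IsAtomic.equal _ _).isQF (by simp)

end Ultrapower

section DirectLimit

variable {ι : Type*} [Preorder ι] [IsDirectedOrder ι] [Nonempty ι] {G : ι → Type*}
  [∀ i, L.Structure (G i)] {f : ∀ i j, i ≤ j → G i ↪[L] G j}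
  [DirectedSystem G fun i j h => f i j h]

theorem DirectLimit.realize_boundedFormula_of (hf : ∀ i j h, ∃ g : G i ↪ₑ[L] G j, ⇑g = f i j h)
    {n : ℕ} (φ : L.BoundedFormula α n) (i : ι) (v : α → G i) (xs : Fin n → G i) :
    φ.Realize (of L ι G f i ∘ v) (of L ι G f i ∘ xs) ↔ φ.Realize v xs := by
  induction φ generalizing i with
  | falsum => rfl
  | equal => exact (BoundedFormula.IsAtomic.equal _ _).isQF.realize_embedding _
  | rel => exact (BoundedFormula.IsAtomic.rel _ _).isQF.realize_embedding _
  | imp _ _ ih₁ ih₂ => simp only [BoundedFormula.realize_imp, ih₁, ih₂]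
  | all ψ ih =>
    simp only [BoundedFormula.realize_all]
    refine ⟨fun hψ y => (ih i v (Fin.snoc xs y)).1 ?_, fun hψ z => ?_⟩
    · simpa [Fin.comp_snoc] using hψ (of L ι G f i y)
    · obtain ⟨j, y, rfl⟩ := exists_of z
      obtain ⟨k, hik, hjk⟩ := exists_ge_ge i j
      obtain ⟨g, hg⟩ := hf i k hik
      have hψk := BoundedFormula.realize_all.1 ((g.map_boundedFormula ψ.all v xs).2
        (BoundedFormula.realize_all.2 hψ)) (f j k hjk y)
      have hof (x : G i) : of L ι G f k (g x) = of L ι G f i x := hg ▸ of_f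
      have := (ih k (g ∘ v) _).2 hψk
      rwa [Fin.comp_snoc, of_f,
        show of L ι G f k ∘ g ∘ v = of L ι G f i ∘ v from funext fun _ => hof _,
        show of L ι G f k ∘ g ∘ xs = of L ι G f i ∘ xs from funext fun _ => hof _] at this

noncomputable def DirectLimit.ofElementary (hf : ∀ i j h, ∃ g : G i ↪ₑ[L] G j, ⇑g = f i j h)
    (i : ι) : G i ↪ₑ[L] DirectLimit G f where
  toFun := of L ι G f i
  map_formula' _ φ x := by
    simpa [Formula.Realize, Subsingleton.elim (of L ι G f i ∘ default) default] using
      DirectLimit.realize_boundedFormula_of hf φ i x default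

end DirectLimit

section NatChain

open FirstOrder.Language.DirectedSystem

variable {G : ℕ → Type*} [∀ n, L.Structure (G n)]

theorem DirectedSystem.natLERec_succ_apply (e : ∀ n, G n ↪[L] G (n + 1)) {i j : ℕ} (h : i ≤ j)
    (x : G i) :
    natLERec e i (j + 1) (h.trans j.le_succ) x = e j (natLERec e i j h x) := by
  simp [Nat.leRecOn_succ h]

theorem DirectedSystem.natLERec_succ_self (e : ∀ n, G n ↪[L] G (n + 1)) (n : ℕ) (x : G n) :
    natLERec e n (n + 1) n.le_succ x = e n x := by
  simpa [map_self] using natLERec_succ_apply e le_rfl x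

theorem DirectedSystem.exists_elementaryEmbedding_natLERec (e : ∀ n, G n ↪ₑ[L] G (n + 1)) (i j : ℕ)
    (h : i ≤ j) : ∃ g : G i ↪ₑ[L] G j, ⇑g = natLERec (fun n => (e n).toEmbedding) i j h := by
  induction j, h using Nat.le_induction with
  | base => exact ⟨.refl L _, funext fun x => (DirectedSystem.map_self _ x).symm⟩
  | succ j h ih =>
    obtain ⟨g, hg⟩ := ih
    exact ⟨(e j).comp g, funext fun x => by simp [natLERec_succ_apply _ h, hg]⟩

noncomputable def DirectLimit.natShift (e f : ∀ n, G n ↪[L] G (n + 1))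
    (hef : ∀ n x, f (n + 1) (e n x) = e (n + 1) (f n x)) :
    DirectLimit G (natLERec e) ↪[L] DirectLimit G (natLERec e) :=
  DirectLimit.lift L ℕ G (natLERec e) (fun n => (of L ℕ G (natLERec e) (n + 1)).comp (f n)) <| by
    intro i j hij x
    induction j, hij using Nat.le_induction with
    | base => simp only [Embedding.comp_apply, map_self]
    | succ j h ih =>
      rw [← ih, Embedding.comp_apply, Embedding.comp_apply, natLERec_succ_apply _ h, hef,
        ← natLERec_succ_self e, of_f]

theorem DirectLimit.natShift_of (e f : ∀ n, G n ↪[L] G (n + 1))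
    (hef : ∀ n x, f (n + 1) (e n x) = e (n + 1) (f n x)) (n : ℕ) (x : G n) :
    natShift e f hef (of L ℕ G (natLERec e) n x) = of L ℕ G (natLERec e) (n + 1) (f n x) :=
  DirectLimit.lift_of ..

end NatChain

theorem exists_elementaryEmbedding_embedding_of_ladder {G : ℕ → Type u} [∀ n, L.Structure (G n)]
    (e : ∀ n, G n ↪ₑ[L] G (n + 1)) (f : ∀ n, G n ↪[L] G (n + 1))
    (hef : ∀ n x, f (n + 1) (e n x) = e (n + 1) (f n x)) :
    ∃ (N : Type u) (_ : L.Structure N) (g : G 0 ↪ₑ[L] N) (F : N ↪[L] N),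
      ∀ x y, f 0 x = e 0 y → F (g x) = g y := by
  refine ⟨_, _, DirectLimit.ofElementary (DirectedSystem.exists_elementaryEmbedding_natLERec e) 0,
    DirectLimit.natShift (fun n => (e n).toEmbedding) f hef,
    fun x y hxy => (DirectLimit.natShift_of _ f hef 0 x).trans ?_⟩
  rw [hxy]
  exact (congrArg _ (DirectedSystem.natLERec_succ_self _ 0 y)).symm.trans DirectLimit.of_f

structure EmbeddingPair (L : FirstOrder.Language) where
  Q : Type u
  P : Type u
  [strQ : L.Structure Q]
  [strP : L.Structure P]
  [nonempty : Nonempty P]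
  e : Q ↪ₑ[L] P
  f : Q ↪[L] P

attribute [instance] EmbeddingPair.strQ EmbeddingPair.strP EmbeddingPair.nonempty

namespace EmbeddingPair

variable (s : EmbeddingPair.{u} L)

noncomputable def next : EmbeddingPair.{u} L :=
  let h := existentialTypeSubset_elementaryEmbedding_embedding s.e s.f
  { Q := s.P
    P := h.Ultrapower
    e := ultrapowerDiagonal L h.ultrafilter s.P
    f := h.embedding }

theorem next_f_apply_e (x : s.Q) : s.next.f (s.e x) = s.next.e (s.f x) :=
  (existentialTypeSubset_elementaryEmbedding_embedding s.e s.f).embedding_apply x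

noncomputable def chain : ℕ → EmbeddingPair.{u} L
  | 0 => s
  | n + 1 => (chain n).next

end EmbeddingPair

theorem ExistentialTypeSubset.exists_elementaryEmbedding_embedding {M : Type u} [L.Structure M]
    {c d : γ → M} (h : ExistentialTypeSubset L c d) :
    ∃ (N : Type u) (_ : L.Structure N) (g : M ↪ₑ[L] N) (F : N ↪[L] N),
      ∀ i, F (g (c i)) = g (d i) := by
  cases isEmpty_or_nonempty M
  · exact ⟨M, _, .refl L M, .refl L M, fun i => isEmptyElim (c i)⟩
  let s : EmbeddingPair L := ⟨M, h.Ultrapower, ultrapowerDiagonal L h.ultrafilter M, h.embedding⟩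
  obtain ⟨N, _, g, F, hF⟩ := exists_elementaryEmbedding_embedding_of_ladder
    (fun n => (s.chain n).e) (fun n => (s.chain n).f) fun n => (s.chain n).next_f_apply_e
  exact ⟨N, _, g, F, fun i => hF _ _ (h.embedding_apply i)⟩

theorem ExistentialTypeSubset.of_elementaryEmbedding_embedding {M N : Type*} [L.Structure M]
    [L.Structure N] (g : M ↪ₑ[L] N) (F : N ↪[L] N) {c d : γ → M}
    (h : ∀ i, F (g (c i)) = g (d i)) : ExistentialTypeSubset L c d := by
  have hFg : F ∘ g ∘ c = g ∘ d := funext h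
  refine ((g.toEmbedding.existentialTypeSubset_comp c).trans
    (F.existentialTypeSubset_comp _)).trans ?_
  rw [ElementaryEmbedding.coe_toEmbedding, hFg]
  exact g.comp_existentialTypeSubset d

end FirstOrder.Language

/-- Let `M` be an `L`-structure, `A ⊆ M` and `ā, b̄ ∈ Mⁿ`. Then
`tp^∃(ā/A) ⊆ tp^∃(b̄/A)` if and only if there exist an elementary extension `N` of `M`
and an `L`-embedding `f : N → N` fixing `A` pointwise and sending `ā` to `b̄`. -/
theorem existential_type_subset_iff_embedding {L : FirstOrder.Language} {M : Type u}
    [L.Structure M] (A : Set M) {n : ℕ} (a b : Fin n → M) :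
    (∀ φ : L.Formula (↥A ⊕ Fin n), IsExistential φ →
        φ.Realize (Sum.elim Subtype.val a) → φ.Realize (Sum.elim Subtype.val b)) ↔
    ∃ (N : Type u) (iN : L.Structure N)
      (g : @FirstOrder.Language.ElementaryEmbedding L M N _ iN)
      (f : @FirstOrder.Language.Embedding L N N iN iN),
      (∀ x ∈ A, f (g x) = g x) ∧ ∀ i, f (g (a i)) = g (b i) := by
  constructor
  · intro h
    obtain ⟨N, iN, g, F, hF⟩ :=
      Language.ExistentialTypeSubset.exists_elementaryEmbedding_embedding h
    exact ⟨N, iN, g, F, fun x hx => hF (.inl ⟨x, hx⟩), fun i => hF (.inr i)⟩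
  · rintro ⟨N, iN, g, F, hA, hab⟩
    exact Language.ExistentialTypeSubset.of_elementaryEmbedding_embedding g F
      (Sum.rec (fun x => hA x x.2) hab)
end
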